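/- arXiv:math/0212370 — 2 statements merged into one kernel-verified Lean document; each statement's English description precedes it below -/
import Mathlib

section
/- The trigonometric r-matrix r_tr(u,v) = ħ( (u+v)/(u−v) · Ω₂ + e₋⊗e₊ − e₊⊗e₋ ) satisfies the classical Yang–Baxter equation [r¹²(u₁,u₂), r¹³(u₁,u₃)+r²³(u₂,u₃)] + [r¹³(u₁,u₃), r²³(u₂,u₃)] = 0 for all pairwise distinct u₁,u₂,u₃. -/
open TensorProduct

set_option maxHeartbeats 4000000 in
/-- The trigonometric r-matrix `r_tr(u,v) = hbar((u+v)/(u−v)·Ω₂ + e₋⊗e₊ − e₊⊗e₋)`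
satisfies the classical Yang–Baxter equation, in the triple tensor product of an
associative ℂ-algebra `A` containing the Cartan–Weyl basis `h, e, f` of `sl₂`. -/
theorem trigonometric_rMatrix_CYBE
    (A : Type*) [Ring A] [Algebra ℂ A] (h e f : A)
    (hef : e * f - f * e = h)
    (hhe : h * e - e * h = 2 * e)
    (hhf : h * f - f * h = -(2 * f))
    (hbar : ℂ)
    (Ω12 Ω13 Ω23 F12 F13 F23 : A ⊗[ℂ] (A ⊗[ℂ] A))
    (hΩ12 : Ω12 = (1/2 : ℂ) • (h ⊗ₜ[ℂ] (h ⊗ₜ[ℂ] (1 : A)))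
      + e ⊗ₜ[ℂ] (f ⊗ₜ[ℂ] (1 : A)) + f ⊗ₜ[ℂ] (e ⊗ₜ[ℂ] (1 : A)))
    (hΩ13 : Ω13 = (1/2 : ℂ) • (h ⊗ₜ[ℂ] ((1 : A) ⊗ₜ[ℂ] h))
      + e ⊗ₜ[ℂ] ((1 : A) ⊗ₜ[ℂ] f) + f ⊗ₜ[ℂ] ((1 : A) ⊗ₜ[ℂ] e))
    (hΩ23 : Ω23 = (1 : A) ⊗ₜ[ℂ]
      ((1/2 : ℂ) • (h ⊗ₜ[ℂ] h) + e ⊗ₜ[ℂ] f + f ⊗ₜ[ℂ] e))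
    (hF12 : F12 = f ⊗ₜ[ℂ] (e ⊗ₜ[ℂ] (1 : A)) - e ⊗ₜ[ℂ] (f ⊗ₜ[ℂ] (1 : A)))
    (hF13 : F13 = f ⊗ₜ[ℂ] ((1 : A) ⊗ₜ[ℂ] e) - e ⊗ₜ[ℂ] ((1 : A) ⊗ₜ[ℂ] f))
    (hF23 : F23 = (1 : A) ⊗ₜ[ℂ] (f ⊗ₜ[ℂ] e) - (1 : A) ⊗ₜ[ℂ] (e ⊗ₜ[ℂ] f))
    (r12 r13 r23 : ℂ → ℂ → A ⊗[ℂ] (A ⊗[ℂ] A))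
    (hr12 : ∀ u v, r12 u v = hbar • (((u + v) / (u - v)) • Ω12 + F12))
    (hr13 : ∀ u v, r13 u v = hbar • (((u + v) / (u - v)) • Ω13 + F13))
    (hr23 : ∀ u v, r23 u v = hbar • (((u + v) / (u - v)) • Ω23 + F23))
    (u₁ u₂ u₃ : ℂ) (h12 : u₁ ≠ u₂) (h13 : u₁ ≠ u₃) (h23 : u₂ ≠ u₃) :
    ⁅r12 u₁ u₂, r13 u₁ u₃ + r23 u₂ u₃⁆ + ⁅r13 u₁ u₃, r23 u₂ u₃⁆ = 0 := by
  have d12 : u₁ - u₂ ≠ 0 := sub_ne_zero.mpr h12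
  have d13 : u₁ - u₃ ≠ 0 := sub_ne_zero.mpr h13
  have d23 : u₂ - u₃ ≠ 0 := sub_ne_zero.mpr h23
  have ef : e * f = f * e + h := by rw [← hef]; noncomm_ring
  have he : h * e = e * h + (2:ℂ) • e := by rw [show ((2:ℂ) • e) = 2 * e from by rw [two_smul, two_mul]]; linear_combination (norm := noncomm_ring) hhe
  have hf : h * f = f * h - (2:ℂ) • f := by rw [show ((2:ℂ) • f) = 2 * f from by rw [two_smul, two_mul]]; linear_combination (norm := noncomm_ring) hhf
  simp only [hr12, hr13, hr23, hΩ12, hΩ13, hΩ23, hF12, hF13, hF23, Ring.lie_def]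
  simp only [smul_add, smul_sub, smul_smul, tmul_add, tmul_sub, add_tmul, sub_tmul,
    ← smul_tmul', tmul_smul, add_mul, mul_add, sub_mul, mul_sub, smul_mul_assoc,
    mul_smul_comm, Algebra.TensorProduct.tmul_mul_tmul, one_mul, mul_one,
    ef, he, hf]
  set a := (u₁ + u₂) / (u₁ - u₂) with ha
  set b := (u₁ + u₃) / (u₁ - u₃) with hb
  set c := (u₂ + u₃) / (u₂ - u₃) with hc
  have key : a * b - a * c + b * c = 1 := by
    rw [ha, hb, hc]; field_simp; ring
  match_scalars <;>
    first
      | ring1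
      | linear_combination hbar ^ 2 * key
      | linear_combination (-(hbar ^ 2)) * key
      | linear_combination (hbar ^ 2 / 2) * key
      | linear_combination (-(hbar ^ 2) / 2) * key
      | linear_combination (hbar ^ 2 * 2) * key
      | linear_combination (-(hbar ^ 2) * 2) * key
      | linear_combination (hbar ^ 2 / 4) * key
      | linear_combination (-(hbar ^ 2) / 4) * key
end

section
/- If r_tr(u,v) satisfies the classical Yang–Baxter equation for all u,v and satisfies the scaling identity r_tr(u+a/2, v+a/2) = r_tr(u,v) + c·r_rt(u,v) for all u,v and all a ∈ ℂ with c = ħa/η, then the sum r_rtr(u,v) := r_rt(u,v) + r_tr(u,v) also satisfies the classical Yang–Baxter equation (using the choice a = η/ħ). -/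
open TensorProduct

/-- If `r_tr` satisfies the classical Yang–Baxter equation for all spectral
parameters and satisfies the scaling identity
`r_tr(u+a/2, v+a/2) = r_tr(u,v) + (ħa/η)·r_rt(u,v)` for all `u, v, a ∈ ℂ`,
then the sum `r_rtr := r_rt + r_tr` also satisfies the classical Yang–Baxter
equation (corresponding to the choice `a = η/ħ`).  Here two-tensors are valued in
`A ⊗ A` for a ℂ-algebra `A`, and `r¹², r¹³, r²³` are the standard embeddings
into `A ⊗ A ⊗ A`. -/
theorem sum_rational_trigonometric_CYBE
    (A : Type*) [Ring A] [Algebra ℂ A]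
    (ι12 ι13 ι23 : A ⊗[ℂ] A →ₐ[ℂ] A ⊗[ℂ] (A ⊗[ℂ] A))
    (hι12 : ι12 = Algebra.TensorProduct.map (AlgHom.id ℂ A)
      (Algebra.TensorProduct.includeLeft : A →ₐ[ℂ] A ⊗[ℂ] A))
    (hι13 : ι13 = Algebra.TensorProduct.map (AlgHom.id ℂ A)
      (Algebra.TensorProduct.includeRight : A →ₐ[ℂ] A ⊗[ℂ] A))
    (hι23 : ι23 = (Algebra.TensorProduct.includeRight :
      A ⊗[ℂ] A →ₐ[ℂ] A ⊗[ℂ] (A ⊗[ℂ] A)))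
    (η hbar : ℂ) (hη : η ≠ 0) (hbar0 : hbar ≠ 0)
    (rtr rrt : ℂ → ℂ → A ⊗[ℂ] A)
    (hCYBE : ∀ u₁ u₂ u₃ : ℂ,
      ⁅ι12 (rtr u₁ u₂), ι13 (rtr u₁ u₃) + ι23 (rtr u₂ u₃)⁆
        + ⁅ι13 (rtr u₁ u₃), ι23 (rtr u₂ u₃)⁆ = 0)
    (hscale : ∀ (u v a : ℂ),
      rtr (u + a/2) (v + a/2) = rtr u v + ((hbar * a) / η) • rrt u v)
    (rrtr : ℂ → ℂ → A ⊗[ℂ] A)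
    (hrrtr : ∀ u v, rrtr u v = rrt u v + rtr u v) :
    ∀ u₁ u₂ u₃ : ℂ,
      ⁅ι12 (rrtr u₁ u₂), ι13 (rrtr u₁ u₃) + ι23 (rrtr u₂ u₃)⁆
        + ⁅ι13 (rrtr u₁ u₃), ι23 (rrtr u₂ u₃)⁆ = 0 := by
  intro u₁ u₂ u₃
  have key : ∀ u v : ℂ, rrtr u v = rtr (u + (η / hbar) / 2) (v + (η / hbar) / 2) := by
    intro u v
    rw [hscale, hrrtr]
    have : hbar * (η / hbar) / η = 1 := by field_simp
    rw [this, one_smul, add_comm]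
  simp only [key]
  exact hCYBE _ _ _
end
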